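/- arXiv:1908.08274 — 2 statements merged into one kernel-verified Lean document; each statement's English description precedes it below -/
import Mathlib

section
/- Let u(x,y) be a smooth stationary solution of the planar Swift-Hohenberg equation which is ℓ-periodic in y. Then the quantity S(x) = ∫₀^ℓ [(u + u_{xx} + u_{yy})u_{xy} - u_y(u_x + u_{xxx} + u_{xyy})] dy is independent of x. -/
open Real

noncomputable def pdx (u : ℝ → ℝ → ℝ) : ℝ → ℝ → ℝ := fun x y => deriv (fun x' => u x' y) x

noncomputable def pdy (u : ℝ → ℝ → ℝ) : ℝ → ℝ → ℝ := fun x y => deriv (fun y' => u x y') y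

section Aux

variable {w : ℝ → ℝ → ℝ}

lemma hdx_fd (hw : ContDiff ℝ (⊤ : ℕ∞) (fun p : ℝ × ℝ => w p.1 p.2)) (x y : ℝ) :
    HasDerivAt (fun x' => w x' y)
      (fderiv ℝ (fun p : ℝ × ℝ => w p.1 p.2) (x, y) (1, 0)) x :=
  (show HasDerivAt ((fun p : ℝ × ℝ => w p.1 p.2) ∘ fun x' => (id x', y)) _ x from ((hw.differentiable (by simp) (x, y)).hasFDerivAt).comp_hasDerivAt x
    ((hasDerivAt_id x).prodMk (hasDerivAt_const x y)))

lemma hdy_fd (hw : ContDiff ℝ (⊤ : ℕ∞) (fun p : ℝ × ℝ => w p.1 p.2)) (x y : ℝ) :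
    HasDerivAt (fun y' => w x y')
      (fderiv ℝ (fun p : ℝ × ℝ => w p.1 p.2) (x, y) (0, 1)) y :=
  ((hw.differentiable (by simp) (x, y)).hasFDerivAt).comp_hasDerivAt y
    ((hasDerivAt_const y x).prodMk (hasDerivAt_id y))

lemma pdx_eq_fd (hw : ContDiff ℝ (⊤ : ℕ∞) (fun p : ℝ × ℝ => w p.1 p.2)) (x y : ℝ) :
    pdx w x y = fderiv ℝ (fun p : ℝ × ℝ => w p.1 p.2) (x, y) (1, 0) :=
  (hdx_fd hw x y).deriv

lemma pdy_eq_fd (hw : ContDiff ℝ (⊤ : ℕ∞) (fun p : ℝ × ℝ => w p.1 p.2)) (x y : ℝ) :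
    pdy w x y = fderiv ℝ (fun p : ℝ × ℝ => w p.1 p.2) (x, y) (0, 1) :=
  (hdy_fd hw x y).deriv

lemma hasDerivAt_pdx (hw : ContDiff ℝ (⊤ : ℕ∞) (fun p : ℝ × ℝ => w p.1 p.2)) (x y : ℝ) :
    HasDerivAt (fun x' => w x' y) (pdx w x y) x := by
  rw [pdx_eq_fd hw x y]; exact hdx_fd hw x y

lemma hasDerivAt_pdy (hw : ContDiff ℝ (⊤ : ℕ∞) (fun p : ℝ × ℝ => w p.1 p.2)) (x y : ℝ) :
    HasDerivAt (fun y' => w x y') (pdy w x y) y := by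
  rw [pdy_eq_fd hw x y]; exact hdy_fd hw x y

lemma contDiff_pdx (hw : ContDiff ℝ (⊤ : ℕ∞) (fun p : ℝ × ℝ => w p.1 p.2)) :
    ContDiff ℝ (⊤ : ℕ∞) (fun p : ℝ × ℝ => pdx w p.1 p.2) := by
  have h : (fun p : ℝ × ℝ => pdx w p.1 p.2)
      = fun p => fderiv ℝ (fun q : ℝ × ℝ => w q.1 q.2) p (1, 0) :=
    funext fun p => pdx_eq_fd hw p.1 p.2
  rw [h]
  exact (ContinuousLinearMap.apply ℝ ℝ ((1, 0) : ℝ × ℝ)).contDiff.comp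
    (hw.fderiv_right (by simp))

lemma contDiff_pdy (hw : ContDiff ℝ (⊤ : ℕ∞) (fun p : ℝ × ℝ => w p.1 p.2)) :
    ContDiff ℝ (⊤ : ℕ∞) (fun p : ℝ × ℝ => pdy w p.1 p.2) := by
  have h : (fun p : ℝ × ℝ => pdy w p.1 p.2)
      = fun p => fderiv ℝ (fun q : ℝ × ℝ => w q.1 q.2) p (0, 1) :=
    funext fun p => pdy_eq_fd hw p.1 p.2
  rw [h]
  exact (ContinuousLinearMap.apply ℝ ℝ ((0, 1) : ℝ × ℝ)).contDiff.comp
    (hw.fderiv_right (by simp))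

lemma pdx_pdy_comm (hw : ContDiff ℝ (⊤ : ℕ∞) (fun p : ℝ × ℝ => w p.1 p.2)) :
    pdx (pdy w) = pdy (pdx w) := by
  funext x y
  have h2 : ContDiff ℝ (⊤ : ℕ∞) (fderiv ℝ (fun p : ℝ × ℝ => w p.1 p.2)) := hw.fderiv_right (by simp)
  have hdf : ∀ (v : ℝ × ℝ) (p : ℝ × ℝ),
      HasFDerivAt (fun q => fderiv ℝ (fun p : ℝ × ℝ => w p.1 p.2) q v)
        ((ContinuousLinearMap.apply ℝ ℝ v).comp
          (fderiv ℝ (fderiv ℝ (fun p : ℝ × ℝ => w p.1 p.2)) p)) p :=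
    fun v p => (ContinuousLinearMap.apply ℝ ℝ v).hasFDerivAt.comp p
      (h2.differentiable (by simp) p).hasFDerivAt
  have e1 : pdx (pdy w) x y
      = fderiv ℝ (fderiv ℝ (fun p : ℝ × ℝ => w p.1 p.2)) (x, y) (1, 0) (0, 1) := by
    rw [pdx_eq_fd (contDiff_pdy hw) x y]
    have h : (fun p : ℝ × ℝ => pdy w p.1 p.2)
        = fun p => fderiv ℝ (fun q : ℝ × ℝ => w q.1 q.2) p (0, 1) :=
      funext fun p => pdy_eq_fd hw p.1 p.2
    rw [h, (hdf (0, 1) (x, y)).fderiv]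
    rfl
  have e2 : pdy (pdx w) x y
      = fderiv ℝ (fderiv ℝ (fun p : ℝ × ℝ => w p.1 p.2)) (x, y) (0, 1) (1, 0) := by
    rw [pdy_eq_fd (contDiff_pdx hw) x y]
    have h : (fun p : ℝ × ℝ => pdx w p.1 p.2)
        = fun p => fderiv ℝ (fun q : ℝ × ℝ => w q.1 q.2) p (1, 0) :=
      funext fun p => pdx_eq_fd hw p.1 p.2
    rw [h, (hdf (1, 0) (x, y)).fderiv]
    rfl
  rw [e1, e2]
  exact hw.contDiffAt.isSymmSndFDerivAt (by rw [minSmoothness_of_isRCLikeNormedField]; exact WithTop.coe_le_coe.mpr (le_top : (2 : ℕ∞) ≤ ⊤)) (1, 0) (0, 1)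

lemma per_pdx {c : ℝ} (hp : ∀ x y, w x (y + c) = w x y) :
    ∀ x y, pdx w x (y + c) = pdx w x y := by
  intro x y
  show deriv (fun x' => w x' (y + c)) x = deriv (fun x' => w x' y) x
  congr 1
  exact funext fun x' => hp x' y

lemma per_pdy {c : ℝ} (hw : ContDiff ℝ (⊤ : ℕ∞) (fun p : ℝ × ℝ => w p.1 p.2))
    (hp : ∀ x y, w x (y + c) = w x y) :
    ∀ x y, pdy w x (y + c) = pdy w x y := by
  intro x y
  have hd := hasDerivAt_pdy hw x (y + c)
  have hcomp : HasDerivAt (fun y' => w x (y' + c)) (pdy w x (y + c) * 1) y :=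
    hd.comp y ((hasDerivAt_id y).add_const c)
  rw [mul_one] at hcomp
  have h : (fun y' => w x (y' + c)) = fun y' => w x y' := funext fun y' => hp x y'
  rw [h] at hcomp
  exact hcomp.deriv.symm

end Aux
noncomputable def gSH (u : ℝ → ℝ → ℝ) (x y : ℝ) : ℝ :=
  (u x y + pdx (pdx u) x y + pdy (pdy u) x y) * pdx (pdy u) x y
    - pdy u x y * (pdx u x y + pdx (pdx (pdx u)) x y + pdx (pdy (pdy u)) x y)

noncomputable def PSH (u : ℝ → ℝ → ℝ) (x y : ℝ) : ℝ :=
  (u x y + pdx (pdx u) x y + pdy (pdy u) x y) * pdx (pdx (pdy u)) x y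
    - pdy u x y * (pdx (pdx u) x y + pdx (pdx (pdx (pdx u))) x y
      + pdx (pdx (pdy (pdy u))) x y)

noncomputable def GSH (f : ℝ → ℝ) (μ : ℝ) (u : ℝ → ℝ → ℝ) (x y : ℝ) : ℝ :=
  ((u x y + pdx (pdx u) x y + pdy (pdy u) x y)
      * (u x y + pdx (pdx u) x y + pdy (pdy u) x y)) / 2
    - (∫ s in (0:ℝ)..(u x y), f s)
    + μ * ((u x y * u x y) / 2)
    + pdy u x y * (pdy u x y + pdy (pdx (pdx u)) x y + pdy (pdy (pdy u)) x y)
    - pdy (pdy u) x y * (u x y + pdx (pdx u) x y + pdy (pdy u) x y)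

section Main

variable {u : ℝ → ℝ → ℝ}

lemma hasDerivAt_gSH (hu : ContDiff ℝ (⊤ : ℕ∞) (fun p : ℝ × ℝ => u p.1 p.2)) (x y : ℝ) :
    HasDerivAt (fun x' => gSH u x' y) (PSH u x y) x := by
  have hx := contDiff_pdx hu
  have hy := contDiff_pdy hu
  have hxx := contDiff_pdx hx
  have hxy := contDiff_pdx hy
  have hyy := contDiff_pdy hy
  have hxxx := contDiff_pdx hxx
  have hxyy := contDiff_pdx hyy
  have hA := hasDerivAt_pdx hu x y
  have hB := hasDerivAt_pdx hxx x y
  have hC := hasDerivAt_pdx hyy x y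
  have hM := hasDerivAt_pdx hxy x y
  have hD := hasDerivAt_pdx hy x y
  have hN1 := hasDerivAt_pdx hx x y
  have hN2 := hasDerivAt_pdx hxxx x y
  have hN3 := hasDerivAt_pdx hxyy x y
  have big := (((hA.add hB).add hC).mul hM).sub (hD.mul ((hN1.add hN2).add hN3))
  unfold gSH
  convert big using 1
  · rfl
  · rfl
  · rfl
  unfold PSH
  simp only [Pi.add_apply]
  ring

lemma hasDerivAt_GSH (f : ℝ → ℝ) (μ : ℝ) (hf : ContDiff ℝ (⊤ : ℕ∞) f)
    (hu : ContDiff ℝ (⊤ : ℕ∞) (fun p : ℝ × ℝ => u p.1 p.2))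
    (hode : ∀ x y, -(u x y + 2*(pdx (pdx u) x y + pdy (pdy u) x y)
        + (pdx (pdx (pdx (pdx u))) x y + 2*(pdx (pdx (pdy (pdy u))) x y)
          + pdy (pdy (pdy (pdy u))) x y))
        - μ * u x y + f (u x y) = 0) (x y : ℝ) :
    HasDerivAt (fun y' => GSH f μ u x y') (PSH u x y) y := by
  have hx := contDiff_pdx hu
  have hy := contDiff_pdy hu
  have hxx := contDiff_pdx hx
  have hxy := contDiff_pdx hy
  have hyy := contDiff_pdy hy
  have hyxx := contDiff_pdy hxx
  have hyyy := contDiff_pdy hyy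
  have ha := hasDerivAt_pdy hu x y
  have hb := hasDerivAt_pdy hxx x y
  have hcc := hasDerivAt_pdy hyy x y
  have hdd := hasDerivAt_pdy hy x y
  have hee := hasDerivAt_pdy hyxx x y
  have hkk := hasDerivAt_pdy hyyy x y
  have hFt : HasDerivAt (fun t => ∫ s in (0:ℝ)..t, f s) (f (u x y)) (u x y) :=
    intervalIntegral.integral_hasDerivAt_right
      (hf.continuous.intervalIntegrable _ _)
      (hf.continuous.stronglyMeasurableAtFilter _ _)
      hf.continuous.continuousAt
  have hF : HasDerivAt (fun y' => ∫ s in (0:ℝ)..(u x y'), f s)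
      (f (u x y) * pdy u x y) y := hFt.comp y ha
  have hAA := (ha.add hb).add hcc
  have big := (((((hAA.mul hAA).div_const 2).sub hF).add
      (((ha.mul ha).div_const 2).const_mul μ)).add
      (hdd.mul ((hdd.add hee).add hkk))).sub (hcc.mul hAA)
  unfold GSH
  convert big using 1
  · rfl
  · rfl
  · rfl
  have comm_u : pdx (pdy u) = pdy (pdx u) := pdx_pdy_comm hu
  have E1 : pdy (pdx (pdx u)) = pdx (pdx (pdy u)) :=
    (pdx_pdy_comm hx).symm.trans (congrArg pdx comm_u.symm)
  have E2 : pdy (pdy (pdx (pdx u))) = pdx (pdx (pdy (pdy u))) :=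
    (congrArg pdy E1).trans ((pdx_pdy_comm hxy).symm.trans
      (congrArg pdx (pdx_pdy_comm hy).symm))
  rw [E2, E1]
  unfold PSH
  simp only [Pi.add_apply]
  linear_combination (pdy u x y) * hode x y

end Main
section Main2

variable {u : ℝ → ℝ → ℝ}

lemma cont_PSH (hu : ContDiff ℝ (⊤ : ℕ∞) (fun p : ℝ × ℝ => u p.1 p.2)) :
    Continuous (fun p : ℝ × ℝ => PSH u p.1 p.2) := by
  have hx := contDiff_pdx hu
  have hy := contDiff_pdy hu
  have hxx := contDiff_pdx hx
  have hxy := contDiff_pdx hy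
  have hyy := contDiff_pdy hy
  have hxxy := contDiff_pdx hxy
  have hxyy := contDiff_pdx hyy
  have hxxx := contDiff_pdx hxx
  have hxxxx := contDiff_pdx hxxx
  have hxxyy := contDiff_pdx hxyy
  unfold PSH
  exact (((hu.continuous.add hxx.continuous).add hyy.continuous).mul
      hxxy.continuous).sub (hy.continuous.mul
      ((hxx.continuous.add hxxxx.continuous).add hxxyy.continuous))

lemma cont_gSH (hu : ContDiff ℝ (⊤ : ℕ∞) (fun p : ℝ × ℝ => u p.1 p.2)) :
    Continuous (fun p : ℝ × ℝ => gSH u p.1 p.2) := by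
  have hx := contDiff_pdx hu
  have hy := contDiff_pdy hu
  have hxx := contDiff_pdx hx
  have hxy := contDiff_pdx hy
  have hyy := contDiff_pdy hy
  have hxyy := contDiff_pdx hyy
  have hxxx := contDiff_pdx hxx
  unfold gSH
  exact (((hu.continuous.add hxx.continuous).add hyy.continuous).mul
      hxy.continuous).sub (hy.continuous.mul
      ((hx.continuous.add hxxx.continuous).add hxyy.continuous))

lemma integral_PSH_zero (f : ℝ → ℝ) (μ ℓ : ℝ) (hf : ContDiff ℝ (⊤ : ℕ∞) f)
    (hu : ContDiff ℝ (⊤ : ℕ∞) (fun p : ℝ × ℝ => u p.1 p.2))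
    (hper : ∀ x y, u x (y + ℓ) = u x y)
    (hode : ∀ x y, -(u x y + 2*(pdx (pdx u) x y + pdy (pdy u) x y)
        + (pdx (pdx (pdx (pdx u))) x y + 2*(pdx (pdx (pdy (pdy u))) x y)
          + pdy (pdy (pdy (pdy u))) x y))
        - μ * u x y + f (u x y) = 0) (x : ℝ) :
    (∫ y in (0:ℝ)..ℓ, PSH u x y) = 0 := by
  have hx := contDiff_pdx hu
  have hy := contDiff_pdy hu
  have hxx := contDiff_pdx hx
  have hyy := contDiff_pdy hy
  have hint : IntervalIntegrable (fun y => PSH u x y) MeasureTheory.volume 0 ℓ :=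
    ((cont_PSH hu).comp (Continuous.prodMk_right x)).intervalIntegrable _ _
  rw [intervalIntegral.integral_eq_sub_of_hasDerivAt
    (fun y _ => hasDerivAt_GSH f μ hf hu hode x y) hint]
  have p1 : u x ℓ = u x 0 := by simpa using hper x 0
  have p2 : pdx (pdx u) x ℓ = pdx (pdx u) x 0 := by
    simpa using per_pdx (per_pdx hper) x 0
  have p3 : pdy (pdy u) x ℓ = pdy (pdy u) x 0 := by
    simpa using per_pdy hy (per_pdy hu hper) x 0
  have p4 : pdy u x ℓ = pdy u x 0 := by simpa using per_pdy hu hper x 0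
  have p5 : pdy (pdx (pdx u)) x ℓ = pdy (pdx (pdx u)) x 0 := by
    simpa using per_pdy hxx (per_pdx (per_pdx hper)) x 0
  have p6 : pdy (pdy (pdy u)) x ℓ = pdy (pdy (pdy u)) x 0 := by
    simpa using per_pdy hyy (per_pdy hy (per_pdy hu hper)) x 0
  unfold GSH
  rw [p1, p2, p3, p4, p5, p6]
  ring

end Main2
/-- For a smooth stationary solution of the planar Swift-Hohenberg equation which is
`ℓ`-periodic in `y`, the quantity
`S(x) = ∫₀^ℓ [(u + u_{xx} + u_{yy})u_{xy} - u_y(u_x + u_{xxx} + u_{xyy})] dy`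
is independent of `x`. -/
theorem S_conserved_planar (μ ℓ : ℝ) (hℓ : 0 < ℓ) (f : ℝ → ℝ)
    (hf : ContDiff ℝ (⊤ : ℕ∞) f) (hf0 : f 0 = 0)
    (u : ℝ → ℝ → ℝ) (hu : ContDiff ℝ (⊤ : ℕ∞) (fun p : ℝ × ℝ => u p.1 p.2))
    (hper : ∀ x y, u x (y + ℓ) = u x y)
    (hode : ∀ x y, -(u x y + 2*(pdx (pdx u) x y + pdy (pdy u) x y)
        + (pdx (pdx (pdx (pdx u))) x y + 2*(pdx (pdx (pdy (pdy u))) x y)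
          + pdy (pdy (pdy (pdy u))) x y))
        - μ * u x y + f (u x y) = 0) :
    ∀ x₁ x₂ : ℝ,
      (∫ y in (0:ℝ)..ℓ, ((u x₁ y + pdx (pdx u) x₁ y + pdy (pdy u) x₁ y) * pdx (pdy u) x₁ y
        - pdy u x₁ y * (pdx u x₁ y + pdx (pdx (pdx u)) x₁ y + pdx (pdy (pdy u)) x₁ y)))
      = (∫ y in (0:ℝ)..ℓ, ((u x₂ y + pdx (pdx u) x₂ y + pdy (pdy u) x₂ y) * pdx (pdy u) x₂ y
        - pdy u x₂ y * (pdx u x₂ y + pdx (pdx (pdx u)) x₂ y + pdx (pdy (pdy u)) x₂ y))) := by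
  have main : ∀ a b : ℝ, a ≤ b →
      (∫ y in (0:ℝ)..ℓ, gSH u a y) = ∫ y in (0:ℝ)..ℓ, gSH u b y := by
    intro a b hab
    have hPc := cont_PSH hu
    have hgc := cont_gSH hu
    have h1 : IntervalIntegrable (fun y => gSH u a y) MeasureTheory.volume 0 ℓ :=
      (hgc.comp (Continuous.prodMk_right a)).intervalIntegrable _ _
    have h2 : IntervalIntegrable (fun y => gSH u b y) MeasureTheory.volume 0 ℓ :=
      (hgc.comp (Continuous.prodMk_right b)).intervalIntegrable _ _
    have step : ∀ y : ℝ, gSH u b y - gSH u a y = ∫ x in a..b, PSH u x y := by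
      intro y
      exact (intervalIntegral.integral_eq_sub_of_hasDerivAt
        (fun x _ => hasDerivAt_gSH hu x y)
        ((hPc.comp (continuous_id.prodMk continuous_const)).intervalIntegrable a b)).symm
    have diff : (∫ y in (0:ℝ)..ℓ, gSH u b y) - (∫ y in (0:ℝ)..ℓ, gSH u a y)
        = ∫ y in (0:ℝ)..ℓ, (gSH u b y - gSH u a y) :=
      (intervalIntegral.integral_sub h2 h1).symm
    have swap : (∫ y in (0:ℝ)..ℓ, ∫ x in a..b, PSH u x y)
        = ∫ x in a..b, ∫ y in (0:ℝ)..ℓ, PSH u x y := by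
      simp_rw [intervalIntegral.integral_of_le hℓ.le, intervalIntegral.integral_of_le hab]
      apply MeasureTheory.integral_integral_swap
      have huncurry : Function.uncurry (fun y x => PSH u x y)
          = fun q : ℝ × ℝ => PSH u q.2 q.1 := rfl
      rw [huncurry, MeasureTheory.Measure.prod_restrict]
      exact (((hPc.comp continuous_swap).continuousOn.integrableOn_compact
        (isCompact_Icc.prod isCompact_Icc)).mono_set
        (Set.prod_mono Set.Ioc_subset_Icc_self Set.Ioc_subset_Icc_self))
    have zero : (∫ y in (0:ℝ)..ℓ, (gSH u b y - gSH u a y)) = 0 := by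
      rw [intervalIntegral.integral_congr (fun y _ => step y), swap]
      simp [integral_PSH_zero f μ ℓ hf hu hper hode]
    have := diff.trans zero
    linarith [this]
  intro x₁ x₂
  show (∫ y in (0:ℝ)..ℓ, gSH u x₁ y) = ∫ y in (0:ℝ)..ℓ, gSH u x₂ y
  rcases le_total x₁ x₂ with h | h
  · exact main x₁ x₂ h
  · exact (main x₂ x₁ h).symm
end

section
/- For an oblique stripe solution u(x,y) = uₛ(kₓx + k_y y) with uₛ: ℝ → ℝ smooth and 2π-periodic, the conserved quantity S reduces (up to the substitution ξ = kₓx + k_y y) to S = 2kₓk_y ∫₀^{2π} [|k|² uₛ''(ξ)² - uₛ'(ξ)²] dξ where |k|² = kₓ² + k_y², i.e., substituting u(x,y)=uₛ(kₓx+k_yy) into the integrand (u+u_{xx}+u_{yy})u_{xy} - u_y(u_x+u_{xxx}+u_{xyy}) and integrating y over one period of the stripe yields this expression. -/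
open Real

lemma deriv_comp_lin (f : ℝ → ℝ) (hf : Differentiable ℝ f) (c a b x : ℝ) :
    deriv (fun t => c * f (a*t + b)) x = c * (a * deriv f (a*x + b)) := by
  have h1 : HasDerivAt (fun t : ℝ => a*t + b) a x := by
    simpa using ((hasDerivAt_id x).const_mul a).add_const b
  have h2 := (((hf (a*x+b)).hasDerivAt.comp x h1).const_mul c).deriv
  have h3 : (fun y => c * ((f ∘ fun t => a * t + b) y)) = fun t => c * f (a*t + b) := rfl
  rw [h3] at h2
  rw [h2]; ring

/-- For an oblique stripe solution `u(x,y) = uₛ(kₓx + k_y y)` with `uₛ` smooth and 2π-periodic,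
substituting into the integrand `(u+u_{xx}+u_{yy})u_{xy} - u_y(u_x+u_{xxx}+u_{xyy})` of the
conserved quantity `S` and integrating over one period of the stripe (in `ξ = kₓx + k_y y`)
yields `S = 2kₓk_y ∫₀^{2π} [|k|² uₛ''(ξ)² - uₛ'(ξ)²] dξ` with `|k|² = kₓ² + k_y²`. -/
theorem S_reduces_for_oblique_stripes (kx ky : ℝ) (hky : ky ≠ 0)
    (us : ℝ → ℝ) (hus : ContDiff ℝ (⊤ : ℕ∞) us) (hper : ∀ ξ, us (ξ + 2*π) = us ξ)
    (u : ℝ → ℝ → ℝ) (hu : ∀ x y, u x y = us (kx*x + ky*y)) :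
    ∀ x : ℝ,
      (∫ ξ in (0:ℝ)..(2*π),
        ((u x ((ξ - kx*x)/ky) + pdx (pdx u) x ((ξ - kx*x)/ky) + pdy (pdy u) x ((ξ - kx*x)/ky))
            * pdx (pdy u) x ((ξ - kx*x)/ky)
          - pdy u x ((ξ - kx*x)/ky) * (pdx u x ((ξ - kx*x)/ky)
            + pdx (pdx (pdx u)) x ((ξ - kx*x)/ky) + pdx (pdy (pdy u)) x ((ξ - kx*x)/ky))))
      = 2*kx*ky * ∫ ξ in (0:ℝ)..(2*π),
          ((kx^2 + ky^2) * (iteratedDeriv 2 us ξ)^2 - (deriv us ξ)^2) := by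
  intro x
  set d1 := deriv us with hd1def
  set d2 := deriv d1 with hd2def
  set d3 := deriv d2 with hd3def
  have hus' : ContDiff ℝ (⊤ : ℕ∞) us := hus.of_le (by simp)
  have hdiff : Differentiable ℝ us := hus'.differentiable (by norm_num)
  have hcd1 : ContDiff ℝ (⊤ : ℕ∞) d1 := (contDiff_infty_iff_deriv.mp hus').2
  have hcd2 : ContDiff ℝ (⊤ : ℕ∞) d2 := (contDiff_infty_iff_deriv.mp hcd1).2
  have hcd3 : ContDiff ℝ (⊤ : ℕ∞) d3 := (contDiff_infty_iff_deriv.mp hcd2).2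
  have hdd1 : Differentiable ℝ d1 := hcd1.differentiable (by norm_num)
  have hdd2 : Differentiable ℝ d2 := hcd2.differentiable (by norm_num)
  -- pointwise derivative computations
  have hx1 : ∀ a b, pdx u a b = kx * d1 (kx*a + ky*b) := by
    intro a b
    have h : (fun x' => u x' b) = fun x' => (1:ℝ) * us (kx*x' + ky*b) := by
      funext x'; rw [hu]; ring
    simp only [pdx, h, deriv_comp_lin us hdiff, hd1def]; ring
  have hy1 : ∀ a b, pdy u a b = ky * d1 (kx*a + ky*b) := by
    intro a b
    have h : (fun y' => u a y') = fun y' => (1:ℝ) * us (ky*y' + kx*a) := by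
      funext y'; rw [hu]; ring_nf
    simp only [pdy, h, deriv_comp_lin us hdiff, hd1def]
    rw [add_comm (ky*b) (kx*a)]; ring
  have hxx : ∀ a b, pdx (pdx u) a b = kx * (kx * d2 (kx*a + ky*b)) := by
    intro a b
    have h : (fun x' => pdx u x' b) = fun x' => kx * d1 (kx*x' + ky*b) := by
      funext x'; exact hx1 x' b
    show deriv (fun x' => pdx u x' b) a = _
    rw [h, deriv_comp_lin d1 hdd1]
  have hyy : ∀ a b, pdy (pdy u) a b = ky * (ky * d2 (kx*a + ky*b)) := by
    intro a b
    have h : (fun y' => pdy u a y') = fun y' => ky * d1 (ky*y' + kx*a) := by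
      funext y'; rw [hy1 a y', add_comm (kx*a) (ky*y')]
    show deriv (fun y' => pdy u a y') b = _
    rw [h, deriv_comp_lin d1 hdd1, add_comm (ky*b) (kx*a)]
  have hxy : ∀ a b, pdx (pdy u) a b = ky * (kx * d2 (kx*a + ky*b)) := by
    intro a b
    have h : (fun x' => pdy u x' b) = fun x' => ky * d1 (kx*x' + ky*b) := by
      funext x'; exact hy1 x' b
    show deriv (fun x' => pdy u x' b) a = _
    rw [h, deriv_comp_lin d1 hdd1]
  have hxxx : ∀ a b, pdx (pdx (pdx u)) a b = (kx*kx) * (kx * d3 (kx*a + ky*b)) := by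
    intro a b
    have h : (fun x' => pdx (pdx u) x' b) = fun x' => (kx*kx) * d2 (kx*x' + ky*b) := by
      funext x'; rw [hxx x' b]; ring
    show deriv (fun x' => pdx (pdx u) x' b) a = _
    rw [h, deriv_comp_lin d2 hdd2]
  have hxyy : ∀ a b, pdx (pdy (pdy u)) a b = (ky*ky) * (kx * d3 (kx*a + ky*b)) := by
    intro a b
    have h : (fun x' => pdy (pdy u) x' b) = fun x' => (ky*ky) * d2 (kx*x' + ky*b) := by
      funext x'; rw [hyy x' b]; ring
    show deriv (fun x' => pdy (pdy u) x' b) a = _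
    rw [h, deriv_comp_lin d2 hdd2]
  have harg : ∀ ξ : ℝ, kx*x + ky*((ξ - kx*x)/ky) = ξ := by
    intro ξ; field_simp; ring
  have hit2 : iteratedDeriv 2 us = d2 := by
    rw [show (2:ℕ) = 1 + 1 from rfl, iteratedDeriv_succ, iteratedDeriv_one]
  -- periodicity facts
  have hper1 : d1 (2*π) = d1 0 := by
    have h : (fun t => us (t + 2*π)) = us := funext hper
    have h2 : deriv (fun t => us (t + 2*π)) 0 = d1 (0 + 2*π) := by
      rw [hd1def, deriv_comp_add_const]
    rw [h] at h2
    rw [← hd1def] at h2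
    simpa using h2.symm
  have hperd1 : ∀ ξ, d1 (ξ + 2*π) = d1 ξ := by
    intro ξ
    have h : (fun t => us (t + 2*π)) = us := funext hper
    have h2 : deriv (fun t => us (t + 2*π)) ξ = d1 (ξ + 2*π) := by
      rw [hd1def, deriv_comp_add_const]
    rw [h, ← hd1def] at h2
    exact h2.symm
  have hper2 : d2 (2*π) = d2 0 := by
    have h : (fun t => d1 (t + 2*π)) = d1 := funext hperd1
    have h2 : deriv (fun t => d1 (t + 2*π)) 0 = d2 (0 + 2*π) := by
      rw [hd2def, deriv_comp_add_const]
    rw [h, ← hd2def] at h2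
    simpa using h2.symm
  have hus2π : us (2*π) = us 0 := by simpa using hper 0
  -- integration by parts identities
  have e1 : (∫ ξ in (0:ℝ)..(2*π), (d1 ξ * d1 ξ + us ξ * d2 ξ)) = 0 := by
    rw [intervalIntegral.integral_deriv_mul_eq_sub_of_hasDerivAt
      (hus'.continuous.continuousOn) (hcd1.continuous.continuousOn)
      (fun t _ => (hdiff t).hasDerivAt) (fun t _ => (hdd1 t).hasDerivAt)
      (hcd1.continuous.intervalIntegrable _ _) (hcd2.continuous.intervalIntegrable _ _)]
    rw [hus2π, hper1]; ring
  have e2 : (∫ ξ in (0:ℝ)..(2*π), (d2 ξ * d2 ξ + d1 ξ * d3 ξ)) = 0 := by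
    rw [intervalIntegral.integral_deriv_mul_eq_sub_of_hasDerivAt
      (hcd1.continuous.continuousOn) (hcd2.continuous.continuousOn)
      (fun t _ => (hdd1 t).hasDerivAt) (fun t _ => (hdd2 t).hasDerivAt)
      (hcd2.continuous.intervalIntegrable _ _) (hcd3.continuous.intervalIntegrable _ _)]
    rw [hper1, hper2]; ring
  -- rewrite the left-hand integrand
  have hLHS : (∫ ξ in (0:ℝ)..(2*π),
        ((u x ((ξ - kx*x)/ky) + pdx (pdx u) x ((ξ - kx*x)/ky) + pdy (pdy u) x ((ξ - kx*x)/ky))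
            * pdx (pdy u) x ((ξ - kx*x)/ky)
          - pdy u x ((ξ - kx*x)/ky) * (pdx u x ((ξ - kx*x)/ky)
            + pdx (pdx (pdx u)) x ((ξ - kx*x)/ky) + pdx (pdy (pdy u)) x ((ξ - kx*x)/ky))))
      = ∫ ξ in (0:ℝ)..(2*π),
          (kx*ky) * (((d1 ξ * d1 ξ + us ξ * d2 ξ) - (kx^2+ky^2)*(d2 ξ * d2 ξ + d1 ξ * d3 ξ))
            + 2*((kx^2+ky^2) * (d2 ξ)^2 - (d1 ξ)^2)) := by
    apply intervalIntegral.integral_congr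
    intro ξ _
    simp only [hu, hx1, hy1, hxx, hyy, hxy, hxxx, hxyy, harg]
    ring
  rw [hLHS, hit2, intervalIntegral.integral_const_mul]
  have hint1 : IntervalIntegrable (fun ξ => d1 ξ * d1 ξ + us ξ * d2 ξ) MeasureTheory.volume 0 (2*π) := by
    exact ((hcd1.continuous.mul hcd1.continuous).add
      (hus'.continuous.mul hcd2.continuous)).intervalIntegrable _ _
  have hint2 : IntervalIntegrable (fun ξ => (kx^2+ky^2)*(d2 ξ * d2 ξ + d1 ξ * d3 ξ)) MeasureTheory.volume 0 (2*π) := by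
    exact (continuous_const.mul ((hcd2.continuous.mul hcd2.continuous).add
      (hcd1.continuous.mul hcd3.continuous))).intervalIntegrable _ _
  have hint3 : IntervalIntegrable (fun ξ => 2*((kx^2+ky^2) * (d2 ξ)^2 - (d1 ξ)^2)) MeasureTheory.volume 0 (2*π) := by
    exact (continuous_const.mul ((continuous_const.mul (hcd2.continuous.pow 2)).sub
      (hcd1.continuous.pow 2))).intervalIntegrable _ _
  rw [intervalIntegral.integral_add (hint1.sub hint2) hint3,
    intervalIntegral.integral_sub hint1 hint2, e1,
    intervalIntegral.integral_const_mul, e2,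
    intervalIntegral.integral_const_mul]
  ring
end
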